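/- arXiv:2307.15549 — 5 statements merged into one kernel-verified Lean document; each statement's English description precedes it below -/
import Mathlib

section
/- Soundness of separation logic: assume that for every command com the predicate transformer ⟦com⟧ satisfies locality, i.e. ⟦com⟧(a⋆b) ⊑ ⟦com⟧(a)⋆b for all predicates a, b. Then every derivable Hoare triple is valid: if ⊢ {a} st {b} is derivable in the separation-logic proof system, then ⟦st⟧(a) ⊑ b. -/
universe u

/-- Predicates over states: sets of states together with a top element `⊤`
indicating failure of a computation. -/
abbrev Preds (σ : Type u) : Type u := WithTop (Set σ)

/-- A separation algebra: a cancellative partial commutative monoid `(Σ, ⋆, emp)`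
with a set of units `emp` such that every state has a unit and the multiplication
of two distinct units is undefined. -/
structure SepAlgebra (σ : Type u) where
  /-- The partial multiplication; `none` means undefined. -/
  mult : σ → σ → Option σ
  mult_comm : ∀ s t, mult s t = mult t s
  mult_assoc : ∀ s t u,
    (mult s t).bind (fun v => mult v u) = (mult t u).bind (fun v => mult s v)
  cancel : ∀ s₁ s₂ t u, mult s₁ t = some u → mult s₂ t = some u → s₁ = s₂
  /-- The set of units. -/
  emp : Set σ
  unit_exists : ∀ s, ∃ e ∈ emp, mult s e = some s
  unit_undef : ∀ e₁ ∈ emp, ∀ e₂ ∈ emp, e₁ ≠ e₂ → mult e₁ e₂ = none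

variable {σ : Type u}

/-- Separating conjunction, lifted to predicates (`⊤` is absorbing). -/
def SepAlgebra.star (A : SepAlgebra σ) (a b : Preds σ) : Preds σ :=
  WithTop.recTopCoe ⊤
    (fun a' => WithTop.recTopCoe ⊤
      (fun b' => (({u | ∃ s ∈ a', ∃ t ∈ b', A.mult s t = some u} : Set σ) : Preds σ)) b) a

/-- Sequential programs over a set `C` of commands. -/
inductive Stmt (C : Type*) where
  | com : C → Stmt C
  | choice : Stmt C → Stmt C → Stmt C
  | seq : Stmt C → Stmt C → Stmt C
  | loop : Stmt C → Stmt C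

variable {C : Type*}

/-- Denotational semantics of programs, derived from a semantics of commands:
choice is join, sequencing is composition, iteration is the join of the iterates. -/
noncomputable def denote (sem : C → Preds σ → Preds σ) : Stmt C → Preds σ → Preds σ
  | .com c => sem c
  | .choice st₁ st₂ => fun a => denote sem st₁ a ⊔ denote sem st₂ a
  | .seq st₁ st₂ => fun a => denote sem st₂ (denote sem st₁ a)
  | .loop st => fun a => ⨆ i : ℕ, (denote sem st)^[i] a

/-- The separation-logic proof system. -/
inductive SLDeriv (A : SepAlgebra σ) (sem : C → Preds σ → Preds σ) :
    Preds σ → Stmt C → Preds σ → Prop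
  | com {c : C} {a b : Preds σ} :
      sem c a ≤ b → SLDeriv A sem a (.com c) b
  | consequence {a a' b b' : Preds σ} {st : Stmt C} :
      a ≤ a' → b' ≤ b → SLDeriv A sem a' st b' → SLDeriv A sem a st b
  | seq {a b d : Preds σ} {st₁ st₂ : Stmt C} :
      SLDeriv A sem a st₁ b → SLDeriv A sem b st₂ d → SLDeriv A sem a (.seq st₁ st₂) d
  | choice {a b : Preds σ} {st₁ st₂ : Stmt C} :
      SLDeriv A sem a st₁ b → SLDeriv A sem a st₂ b → SLDeriv A sem a (.choice st₁ st₂) b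
  | loop {a : Preds σ} {st : Stmt C} :
      SLDeriv A sem a st a → SLDeriv A sem a (.loop st) a
  | frame {a b d : Preds σ} {st : Stmt C} :
      SLDeriv A sem a st b → SLDeriv A sem (A.star a d) st (A.star b d)

lemma star_top_left (A : SepAlgebra σ) (b : Preds σ) : A.star ⊤ b = ⊤ := rfl

lemma preds_bddAbove (s : Set (Preds σ)) : BddAbove s := ⟨⊤, fun _ _ => le_top⟩

lemma preds_iSup_le {ι : Sort*} [Nonempty ι] {f : ι → Preds σ} {a : Preds σ}
    (h : ∀ i, f i ≤ a) : iSup f ≤ a := ciSup_le h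

lemma preds_le_iSup {ι : Sort*} (f : ι → Preds σ) (i : ι) : f i ≤ iSup f :=
  le_ciSup (preds_bddAbove _) i

lemma preds_iSup_mono {ι : Sort*} [Nonempty ι] {f g : ι → Preds σ}
    (h : ∀ i, f i ≤ g i) : iSup f ≤ iSup g :=
  preds_iSup_le fun i => (h i).trans (preds_le_iSup g i)

lemma star_mono_left (A : SepAlgebra σ) {x y : Preds σ} (b : Preds σ) (h : x ≤ y) :
    A.star x b ≤ A.star y b := by
  induction y using WithTop.recTopCoe with
  | top => simp [SepAlgebra.star]
  | coe y' =>
    induction x using WithTop.recTopCoe with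
    | top => exact absurd h (by simp)
    | coe x' =>
      induction b using WithTop.recTopCoe with
      | top => simp [SepAlgebra.star]
      | coe b' =>
        simp only [SepAlgebra.star, WithTop.recTopCoe_coe, WithTop.coe_le_coe] at h ⊢
        rintro u ⟨s, hs, t, ht, hm⟩
        exact ⟨s, h hs, t, ht, hm⟩

lemma sem_mono {sem : C → Preds σ → Preds σ}
    (hjoin : ∀ (c : C) (P : Set (Preds σ)), sem c (sSup P) = ⨆ a ∈ P, sem c a)
    (c : C) : Monotone (sem c) := by
  intro x y hxy
  have h1 : sSup ({x, y} : Set (Preds σ)) = y := by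
    apply le_antisymm
    · refine csSup_le ⟨x, by simp⟩ ?_
      intro z hz
      simp only [Set.mem_insert_iff, Set.mem_singleton_iff] at hz
      rcases hz with rfl | rfl
      · exact hxy
      · exact le_rfl
    · exact le_csSup (preds_bddAbove _) (by simp)
  have h2 := hjoin c {x, y}
  rw [h1] at h2
  rw [h2]
  have step1 : sem c x ≤ ⨆ _ : x ∈ ({x, y} : Set (Preds σ)), sem c x :=
    le_ciSup (preds_bddAbove _) (by simp)
  exact step1.trans
    (preds_le_iSup (fun a => ⨆ _ : a ∈ ({x, y} : Set (Preds σ)), sem c a) x)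

lemma denote_mono {sem : C → Preds σ → Preds σ}
    (hjoin : ∀ (c : C) (P : Set (Preds σ)), sem c (sSup P) = ⨆ a ∈ P, sem c a)
    (st : Stmt C) : Monotone (denote sem st) := by
  induction st with
  | com c => exact sem_mono hjoin c
  | choice st₁ st₂ ih₁ ih₂ =>
    intro x y h
    exact sup_le_sup (ih₁ h) (ih₂ h)
  | seq st₁ st₂ ih₁ ih₂ =>
    intro x y h
    exact ih₂ (ih₁ h)
  | loop st ih =>
    intro x y h
    simp only [denote]
    refine preds_iSup_mono fun i => ?_
    induction i with
    | zero => exact h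
    | succ n ihn =>
      rw [Function.iterate_succ_apply', Function.iterate_succ_apply']
      exact ih ihn

lemma denote_local (A : SepAlgebra σ) {sem : C → Preds σ → Preds σ}
    (hjoin : ∀ (c : C) (P : Set (Preds σ)), sem c (sSup P) = ⨆ a ∈ P, sem c a)
    (hlocal : ∀ (c : C) (a b : Preds σ), sem c (A.star a b) ≤ A.star (sem c a) b)
    (st : Stmt C) (a b : Preds σ) :
    denote sem st (A.star a b) ≤ A.star (denote sem st a) b := by
  induction st generalizing a with
  | com c => exact hlocal c a b
  | choice st₁ st₂ ih₁ ih₂ =>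
    refine sup_le ((ih₁ a).trans ?_) ((ih₂ a).trans ?_)
    · exact star_mono_left A b le_sup_left
    · exact star_mono_left A b le_sup_right
  | seq st₁ st₂ ih₁ ih₂ =>
    calc denote sem st₂ (denote sem st₁ (A.star a b))
        ≤ denote sem st₂ (A.star (denote sem st₁ a) b) :=
          denote_mono hjoin st₂ (ih₁ a)
      _ ≤ A.star (denote sem st₂ (denote sem st₁ a)) b := ih₂ _
  | loop st ih =>
    simp only [denote]
    refine preds_iSup_le fun i => ?_
    have key : (denote sem st)^[i] (A.star a b) ≤ A.star ((denote sem st)^[i] a) b := by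
      induction i with
      | zero => exact le_rfl
      | succ n ihn =>
        rw [Function.iterate_succ_apply', Function.iterate_succ_apply']
        calc denote sem st ((denote sem st)^[n] (A.star a b))
            ≤ denote sem st (A.star ((denote sem st)^[n] a) b) :=
              denote_mono hjoin st ihn
          _ ≤ A.star (denote sem st ((denote sem st)^[n] a)) b := ih _
    exact key.trans
      (star_mono_left A b (preds_le_iSup (fun i => (denote sem st)^[i] a) i))

/-- Soundness of separation logic. If every command's predicate
transformer satisfies locality, then every derivable Hoare triple is valid. -/
theorem soundness_of_separation_logic (A : SepAlgebra σ) (sem : C → Preds σ → Preds σ)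
    (hstrict : ∀ c : C, sem c ⊤ = ⊤)
    (hjoin : ∀ (c : C) (P : Set (Preds σ)), sem c (sSup P) = ⨆ a ∈ P, sem c a)
    (hlocal : ∀ (c : C) (a b : Preds σ), sem c (A.star a b) ≤ A.star (sem c a) b)
    {a b : Preds σ} {st : Stmt C} (h : SLDeriv A sem a st b) :
    denote sem st a ≤ b := by
  clear hstrict
  induction h with
  | com h => exact h
  | consequence ha hb _ ih => exact ((denote_mono hjoin _ ha).trans ih).trans hb
  | seq _ _ ih₁ ih₂ => exact (denote_mono hjoin _ ih₁).trans ih₂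
  | choice _ _ ih₁ ih₂ => exact sup_le ih₁ ih₂
  | @loop a st _ ih =>
    simp only [denote]
    refine preds_iSup_le fun i => ?_
    induction i with
    | zero => exact le_rfl
    | succ n ihn =>
      rw [Function.iterate_succ_apply']
      exact (denote_mono hjoin st ihn).trans ih
  | @frame a b d st _ ih =>
    exact (denote_local A hjoin hlocal st a d).trans (star_mono_left A d ih)
end

section
/- Soundness of context-aware separation logic (CASL): assume that for every command com the predicate transformer ⟦com⟧ satisfies locality (⟦com⟧(a⋆b) ⊑ ⟦com⟧(a)⋆b for all a,b) and that the context-aware transformer ⟦com⟧_c satisfies mediation for every context c (⟦com⟧(a⋆c) ⊑ ⟦com⟧_c(a)⋆c for all predicates a). Then every derivable CASL judgment ⊢ ⟨c⟩{a} st {b} is valid, i.e. ⟦st⟧(a⋆c) ⊑ b⋆c. -/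
/-!
Locality of the commands propagates to whole programs, since locality is preserved by
composition with monotone maps, binary joins and joins of iterates; join preservation of the
commands gives the monotonicity needed. Soundness then follows by induction on the derivation:
(com) is exactly mediation, (frame) is locality of `⟦st⟧` once the frame is commuted past the
context, and (context) and (widen) merely reassociate `a ⋆ d ⋆ c`.
-/

universe u

variable {σ : Type u}

variable {C : Type*}

/-- The context-aware separation logic (CASL) proof system. Judgments
`CASLDeriv A casem c a st b` formalize `⟨c⟩ {a} st {b}`. -/
inductive CASLDeriv (A : SepAlgebra σ) (casem : C → Preds σ → Preds σ → Preds σ) :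
    Preds σ → Preds σ → Stmt C → Preds σ → Prop
  | com {c : C} {ctx a b : Preds σ} :
      casem c ctx a ≤ b → CASLDeriv A casem ctx a (.com c) b
  | consequence {ctx a a' b b' : Preds σ} {st : Stmt C} :
      a ≤ a' → b' ≤ b → CASLDeriv A casem ctx a' st b' → CASLDeriv A casem ctx a st b
  | seq {ctx a b d : Preds σ} {st₁ st₂ : Stmt C} :
      CASLDeriv A casem ctx a st₁ b → CASLDeriv A casem ctx b st₂ d →
      CASLDeriv A casem ctx a (.seq st₁ st₂) d
  | choice {ctx a b : Preds σ} {st₁ st₂ : Stmt C} :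
      CASLDeriv A casem ctx a st₁ b → CASLDeriv A casem ctx a st₂ b →
      CASLDeriv A casem ctx a (.choice st₁ st₂) b
  | loop {ctx a : Preds σ} {st : Stmt C} :
      CASLDeriv A casem ctx a st a → CASLDeriv A casem ctx a (.loop st) a
  | frame {ctx a b d : Preds σ} {st : Stmt C} :
      CASLDeriv A casem ctx a st b →
      CASLDeriv A casem ctx (A.star a d) st (A.star b d)
  | context {ctx a b d : Preds σ} {st : Stmt C} :
      CASLDeriv A casem (A.star ctx d) a st b →
      CASLDeriv A casem ctx (A.star a d) st (A.star b d)
  | widen {ctx a b d : Preds σ} {st : Stmt C} :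
      CASLDeriv A casem ctx (A.star a d) st (A.star b d) →
      CASLDeriv A casem (A.star ctx d) a st b

namespace SepAlgebra

variable (A : SepAlgebra σ)

theorem exists_mult_assoc {s t w u : σ} :
    (∃ v, A.mult s t = some v ∧ A.mult v w = some u) ↔
      ∃ x, A.mult t w = some x ∧ A.mult s x = some u := by
  rw [← Option.bind_eq_some_iff, ← Option.bind_eq_some_iff, A.mult_assoc]

@[simp]
theorem star_top_left (b : Preds σ) : A.star ⊤ b = ⊤ := rfl

@[simp]
theorem star_top_right (a : Preds σ) : A.star a ⊤ = ⊤ := by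
  cases a <;> rfl

theorem coe_star_coe (a b : Set σ) :
    A.star a b = (({u | ∃ s ∈ a, ∃ t ∈ b, A.mult s t = some u} : Set σ) : Preds σ) := rfl

theorem star_mono {a a' b b' : Preds σ} (ha : a ≤ a') (hb : b ≤ b') :
    A.star a b ≤ A.star a' b' := by
  induction a' using WithTop.recTopCoe with
  | top => simp
  | coe a' =>
    induction b' using WithTop.recTopCoe with
    | top => simp
    | coe b' =>
      obtain ⟨a, rfl, haa'⟩ := WithTop.le_coe_iff.mp ha
      obtain ⟨b, rfl, hbb'⟩ := WithTop.le_coe_iff.mp hb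
      rw [coe_star_coe, coe_star_coe, WithTop.coe_le_coe]
      rintro u ⟨s, hs, t, ht, hst⟩
      exact ⟨s, haa' hs, t, hbb' ht, hst⟩

theorem star_comm (a b : Preds σ) : A.star a b = A.star b a := by
  induction a using WithTop.recTopCoe <;> induction b using WithTop.recTopCoe <;>
    try simp only [star_top_left, star_top_right]
  rw [coe_star_coe, coe_star_coe, WithTop.coe_inj]
  ext u
  constructor <;> rintro ⟨s, hs, t, ht, hst⟩ <;>
    exact ⟨t, ht, s, hs, A.mult_comm s t ▸ hst⟩

theorem star_assoc (a b c : Preds σ) : A.star (A.star a b) c = A.star a (A.star b c) := by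
  induction a using WithTop.recTopCoe <;> induction b using WithTop.recTopCoe <;>
    induction c using WithTop.recTopCoe <;>
    try simp only [star_top_left, star_top_right]
  rw [coe_star_coe, coe_star_coe, coe_star_coe, coe_star_coe, WithTop.coe_inj]
  ext u
  constructor
  · rintro ⟨v, ⟨s, hs, t, ht, hst⟩, w, hw, hvw⟩
    obtain ⟨x, htw, hsx⟩ := A.exists_mult_assoc.mp ⟨v, hst, hvw⟩
    exact ⟨s, hs, x, ⟨t, ht, w, hw, htw⟩, hsx⟩
  · rintro ⟨s, hs, x, ⟨t, ht, w, hw, htw⟩, hsx⟩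
    obtain ⟨v, hst, hvw⟩ := A.exists_mult_assoc.mpr ⟨x, htw, hsx⟩
    exact ⟨v, ⟨s, hs, t, ht, hst⟩, w, hw, hvw⟩

theorem star_right_comm (a b c : Preds σ) :
    A.star (A.star a b) c = A.star (A.star a c) b := by
  rw [star_assoc, star_comm A b, ← star_assoc]

def IsLocal (f : Preds σ → Preds σ) : Prop :=
  ∀ a d, f (A.star a d) ≤ A.star (f a) d

variable {A}

theorem IsLocal.comp {f g : Preds σ → Preds σ} (hf : A.IsLocal f) (hg : A.IsLocal g)
    (hf_mono : Monotone f) : A.IsLocal (f ∘ g) :=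
  fun a d => (hf_mono (hg a d)).trans (hf _ d)

theorem IsLocal.sup {f g : Preds σ → Preds σ} (hf : A.IsLocal f) (hg : A.IsLocal g) :
    A.IsLocal (f ⊔ g) :=
  fun a d => sup_le ((hf a d).trans (A.star_mono le_sup_left le_rfl))
    ((hg a d).trans (A.star_mono le_sup_right le_rfl))

theorem IsLocal.iSup {ι : Sort*} {f : ι → Preds σ → Preds σ} (hf : ∀ i, A.IsLocal (f i)) :
    A.IsLocal fun a => ⨆ i, f i a := fun a d =>
  iSup_le fun i => (hf i a d).trans (A.star_mono (le_iSup (f · a) i) le_rfl)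

theorem IsLocal.iterate {f : Preds σ → Preds σ} (hf : A.IsLocal f) (hf_mono : Monotone f)
    (n : ℕ) : A.IsLocal f^[n] :=
  fun a d => hf_mono.iterate_comp_le_of_le (h := (A.star · d)) (fun b => hf b d) n a

end SepAlgebra

open SepAlgebra

theorem Monotone.iterate_le_of_map_le_self {α : Type*} [Preorder α] {f : α → α}
    (hf : Monotone f) {x : α} (hx : f x ≤ x) (n : ℕ) : f^[n] x ≤ x := by
  simpa using Function.Commute.id_right.iterate_le_of_map_le hf monotone_id hx n

theorem denote_monotone {sem : C → Preds σ → Preds σ} (hsem : ∀ c, Monotone (sem c)) :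
    ∀ st : Stmt C, Monotone (denote sem st)
  | .com c => hsem c
  | .choice st₁ st₂ => (denote_monotone hsem st₁).sup (denote_monotone hsem st₂)
  | .seq st₁ st₂ => (denote_monotone hsem st₂).comp (denote_monotone hsem st₁)
  | .loop st => fun _ _ hab => iSup_mono fun i => ((denote_monotone hsem st).iterate i) hab

theorem denote_isLocal {A : SepAlgebra σ} {sem : C → Preds σ → Preds σ}
    (hsem : ∀ c, Monotone (sem c)) (hlocal : ∀ c, A.IsLocal (sem c)) :
    ∀ st : Stmt C, A.IsLocal (denote sem st)
  | .com c => hlocal c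
  | .choice st₁ st₂ => (denote_isLocal hsem hlocal st₁).sup (denote_isLocal hsem hlocal st₂)
  | .seq st₁ st₂ =>
    (denote_isLocal hsem hlocal st₂).comp (denote_isLocal hsem hlocal st₁)
      (denote_monotone hsem st₂)
  | .loop st =>
    IsLocal.iSup fun i => (denote_isLocal hsem hlocal st).iterate (denote_monotone hsem st) i

theorem soundness_of_casl_general (A : SepAlgebra σ) (sem : C → Preds σ → Preds σ)
    (casem : C → Preds σ → Preds σ → Preds σ)
    (hjoin : ∀ (c : C) (P : Set (Preds σ)), sem c (sSup P) = ⨆ a ∈ P, sem c a)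
    (hlocal : ∀ (c : C) (a b : Preds σ), sem c (A.star a b) ≤ A.star (sem c a) b)
    (hmediation : ∀ (c : C) (ctx a : Preds σ),
      sem c (A.star a ctx) ≤ A.star (casem c ctx a) ctx)
    {ctx a b : Preds σ} {st : Stmt C} (h : CASLDeriv A casem ctx a st b) :
    denote sem st (A.star a ctx) ≤ A.star b ctx := by
  have hsem : ∀ c, Monotone (sem c) := fun c =>
    Monotone.of_map_sup fun x y => by simpa only [sSup_pair, iSup_pair] using hjoin c {x, y}
  have hmono := denote_monotone hsem
  have hloc := denote_isLocal hsem hlocal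
  induction h with
  | com hc => exact (hmediation _ _ _).trans (A.star_mono hc le_rfl)
  | consequence ha hb _ ih =>
    exact (hmono _ (A.star_mono ha le_rfl)).trans (ih.trans (A.star_mono hb le_rfl))
  | seq _ _ ih₁ ih₂ => exact (hmono _ ih₁).trans ih₂
  | choice _ _ ih₁ ih₂ => exact sup_le ih₁ ih₂
  | loop _ ih => exact iSup_le fun i => (hmono _).iterate_le_of_map_le_self ih i
  | @frame ctx a b d st _ ih =>
    rw [A.star_right_comm a, A.star_right_comm b]
    exact (hloc st _ d).trans (A.star_mono ih le_rfl)
  | @context ctx a b d _ _ ih =>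
    rwa [A.star_right_comm a, A.star_right_comm b, A.star_assoc a, A.star_assoc b]
  | @widen ctx a b d _ _ ih =>
    rwa [A.star_right_comm a, A.star_right_comm b, A.star_assoc a, A.star_assoc b] at ih

/-- Soundness of context-aware separation logic (CASL).
If every command satisfies locality and every context-aware transformer satisfies
mediation, then every derivable CASL judgment `⟨c⟩{a} st {b}` is valid, i.e.
`⟦st⟧(a⋆c) ⊑ b⋆c`. -/
theorem soundness_of_casl (A : SepAlgebra σ) (sem : C → Preds σ → Preds σ)
    (casem : C → Preds σ → Preds σ → Preds σ)
    (hstrict : ∀ c : C, sem c ⊤ = ⊤)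
    (hjoin : ∀ (c : C) (P : Set (Preds σ)), sem c (sSup P) = ⨆ a ∈ P, sem c a)
    (hlocal : ∀ (c : C) (a b : Preds σ), sem c (A.star a b) ≤ A.star (sem c a) b)
    (hmediation : ∀ (c : C) (ctx a : Preds σ),
      sem c (A.star a ctx) ≤ A.star (casem c ctx a) ctx)
    {ctx a b : Preds σ} {st : Stmt C} (h : CASLDeriv A casem ctx a st b) :
    denote sem st (A.star a ctx) ≤ A.star b ctx :=
  soundness_of_casl_general A sem casem hjoin hlocal hmediation h
end

section
/- Contextualization theorem: fix a command com and predicates a, d. Let a' = up♯(com)(a), ρ = [a']♯, c = ρ*(d) where ρ* is the least fixed point of the functional λf. id ⊔ (ρ ∘ f) on predicate transformers (the reflexive-transitive closure of ρ) applied to d, and b = [c]♯(a'). Then ⟦com⟧(a⋆c) ⊑ b⋆c and d ⊑ c. -/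
universe u

variable {σ : Type u}

/-- Predicates form a complete lattice (set inclusion with `⊤` on top). -/
noncomputable instance Preds.instCompleteLattice {σ : Type u} : CompleteLattice (Preds σ) :=
  completeLatticeOfSup (Preds σ) fun S => by
    rcases S.eq_empty_or_nonempty with rfl | hS
    · constructor
      · rintro x ⟨⟩
      · rintro b -
        have h : sSup (∅ : Set (Preds σ)) = ((⊥ : Set σ) : Preds σ) := by
          rw [WithTop.sSup_eq (by simp) (OrderTop.bddAbove _)]
          simp
        rw [h]
        induction b using WithTop.recTopCoe with
        | top => exact le_top
        | coe b => exact WithTop.coe_le_coe.2 bot_le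
    · exact WithTop.isLUB_sSup' hS

/-- A (partial) ghost multiplication on states, lifted to predicates
(`⊤` is absorbing). -/
def gstar (imult : σ → σ → Option σ) (a b : Preds σ) : Preds σ :=
  WithTop.recTopCoe ⊤
    (fun a' => WithTop.recTopCoe ⊤
      (fun b' => (({u | ∃ s ∈ a', ∃ t ∈ b', imult s t = some u} : Set σ) : Preds σ)) b) a

/-- Knaster–Tarski least (pre-)fixed point of a functional on a complete lattice;
for monotone functionals this is the least fixed point. -/
noncomputable def lfpFun {α : Type*} [CompleteLattice α] (F : α → α) : α :=
  sInf {x | F x ≤ x}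

lemma gstar_mono_left (imult : σ → σ → Option σ) {a b : Preds σ} (c : Preds σ)
    (h : a ≤ b) : gstar imult a c ≤ gstar imult b c := by
  induction b using WithTop.recTopCoe with
  | top => exact le_top
  | coe b =>
    induction a using WithTop.recTopCoe with
    | top => exact absurd h (WithTop.not_top_le_coe b)
    | coe a =>
      induction c using WithTop.recTopCoe with
      | top => exact le_rfl
      | coe c =>
        have hab : a ⊆ b := WithTop.coe_le_coe.mp h
        apply WithTop.coe_le_coe.mpr
        rintro u ⟨s, hs, t, ht, hst⟩
        exact ⟨s, hab hs, t, ht, hst⟩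

lemma star_mono_right (A : SepAlgebra σ) (a : Preds σ) {c d : Preds σ}
    (h : c ≤ d) : A.star a c ≤ A.star a d := by
  induction a using WithTop.recTopCoe with
  | top => exact le_rfl
  | coe a =>
    induction d using WithTop.recTopCoe with
    | top => exact le_top
    | coe d =>
      induction c using WithTop.recTopCoe with
      | top => exact absurd h (WithTop.not_top_le_coe d)
      | coe c =>
        have hcd : c ⊆ d := WithTop.coe_le_coe.mp h
        apply WithTop.coe_le_coe.mpr
        rintro u ⟨s, hs, t, ht, hst⟩
        exact ⟨s, hs, t, hcd ht, hst⟩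

lemma mono_of_join (g : Preds σ → Preds σ)
    (hg : ∀ P : Set (Preds σ), g (sSup P) = ⨆ a ∈ P, g a) : Monotone g := by
  intro p q hpq
  have h1 : g (sSup {p, q}) = ⨆ r ∈ ({p, q} : Set (Preds σ)), g r := hg {p, q}
  have hs : sSup ({p, q} : Set (Preds σ)) = q := by
    refine le_antisymm (sSup_le ?_) (le_sSup (by simp))
    rintro r (rfl | rfl)
    exacts [hpq, le_rfl]
  rw [hs] at h1
  exact h1 ▸ le_biSup g (Set.mem_insert p {q})

/-- Contextualization. Given the decomposition of a command's
semantics into a core update and the induced (ghost-multiplication) update,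
a sound approximate core update `up♯` and a sound approximate ghost
multiplication `[·]♯`, setting `a' = up♯(com)(a)`, `ρ = [a']♯`,
`c = ρ*(d)` (where `ρ*` is the least fixed point of `λf. id ⊔ (ρ ∘ f)`,
applied to `d`) and `b = [c]♯(a')`, we get `⟦com⟧(a⋆c) ⊑ b⋆c` and `d ⊑ c`. -/
theorem contextualization (A : SepAlgebra σ) (imult : σ → σ → Option σ)
    (imult_comm : ∀ s t, imult s t = imult t s)
    (imult_assoc : ∀ s t u,
      (imult s t).bind (fun v => imult v u) = (imult t u).bind (fun v => imult s v))
    -- `sem` is `⟦com⟧`, `up` is the core update `up(com)`,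
    -- `upS` is the approximate core update `up♯(com)`,
    -- `gabs a d` is the approximate ghost multiplication `[a]♯(d)`.
    (sem up upS : Preds σ → Preds σ) (gabs : Preds σ → Preds σ → Preds σ)
    -- all of them are predicate transformers: strict in ⊤ and
    -- distributing over arbitrary joins
    (hsem_strict : sem ⊤ = ⊤)
    (hsem_join : ∀ P : Set (Preds σ), sem (sSup P) = ⨆ a ∈ P, sem a)
    (hup_strict : up ⊤ = ⊤)
    (hup_join : ∀ P : Set (Preds σ), up (sSup P) = ⨆ a ∈ P, up a)
    (hupS_strict : upS ⊤ = ⊤)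
    (hupS_join : ∀ P : Set (Preds σ), upS (sSup P) = ⨆ a ∈ P, upS a)
    (hgabs_strict : ∀ a : Preds σ, gabs a ⊤ = ⊤)
    (hgabs_join : ∀ (a : Preds σ) (P : Set (Preds σ)),
      gabs a (sSup P) = ⨆ d ∈ P, gabs a d)
    -- the semantics decomposes into the core update and the induced update
    (hsem_up : ∀ a d : Preds σ, sem (A.star a d) = up (A.star a d))
    (hup_dec : ∀ a d : Preds σ, up a ≠ ⊤ → up (A.star a d) = gstar imult (up a) d)
    -- `up♯` is an approximate core update
    (hupS_dec : ∀ a d : Preds σ, upS a ≠ ⊤ → upS (A.star a d) = gstar imult (upS a) d)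
    (hupS_sound : ∀ a : Preds σ, up a ≤ upS a)
    -- `[·]♯` is an approximate ghost multiplication: `a ⌢ d ⊑ [d]♯(a) ⋆ [a]♯(d)`
    (hgabs_sound : ∀ a d : Preds σ, gstar imult a d ≤ A.star (gabs d a) (gabs a d))
    (a d : Preds σ)
    (a' : Preds σ) (ha' : a' = upS a)
    (c : Preds σ)
    (hc : c = lfpFun (fun f : Preds σ → Preds σ =>
      (id : Preds σ → Preds σ) ⊔ (gabs a' ∘ f)) d)
    (b : Preds σ) (hb : b = gabs c a') :
    sem (A.star a c) ≤ A.star b c ∧ d ≤ c := by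
  have hGmono : Monotone (gabs a') := mono_of_join _ (hgabs_join a')
  set F : (Preds σ → Preds σ) → (Preds σ → Preds σ) :=
    fun f : Preds σ → Preds σ => (id : Preds σ → Preds σ) ⊔ (gabs a' ∘ f) with hFdef
  have hFmono : Monotone F := by
    intro f g hfg
    exact sup_le_sup_left (fun x => hGmono (hfg x)) _
  have hpre : F (lfpFun F) ≤ lfpFun F := by
    unfold lfpFun
    exact le_sInf fun f hf => le_trans (hFmono (sInf_le hf)) hf
  have hcd : d ⊔ gabs a' c ≤ c := by
    have h := hpre d
    rw [hc]
    simpa [F, Pi.sup_apply] using h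
  have hdc : d ≤ c := le_trans le_sup_left hcd
  have hGc : gabs a' c ≤ c := le_trans le_sup_right hcd
  refine ⟨?_, hdc⟩
  rw [hsem_up a c]
  by_cases htop : a' = ⊤
  · have hb' : b = ⊤ := by rw [hb, htop]; exact hgabs_strict c
    have hstar : A.star b c = ⊤ := by rw [hb']; rfl
    rw [hstar]; exact le_top
  · have hupa : up a ≠ ⊤ := by
      intro h
      exact htop (ha' ▸ top_le_iff.mp (h ▸ hupS_sound a))
    calc up (A.star a c) = gstar imult (up a) c := hup_dec a c hupa
      _ ≤ gstar imult a' c := gstar_mono_left imult c (ha' ▸ hupS_sound a)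
      _ ≤ A.star (gabs c a') (gabs a' c) := hgabs_sound a' c
      _ = A.star b (gabs a' c) := by rw [hb]
      _ ≤ A.star b c := star_mono_right A b hGc
end

section
/- Unique decomposition of flow graphs: if s₁ ⌢ s₂ = t for flow graphs s₁, s₂, then there exist flow graphs t₁ and t₂ such that t = t₁ ⋆ t₂, t₁ has the same node set as s₁ and t₂ has the same node set as s₂; moreover t₁ and t₂ are unique with these properties. -/
universe u

/-- A flow monoid: a commutative monoid whose natural order
(`m ≤ n ↔ ∃ o, n = m + o`) is a partial order that forms an ω-cpo, with
continuous addition. `csup` assigns to every ascending chain its join. -/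
class FlowMonoid (M : Type u) extends AddCommMonoid M, PartialOrder M, IsOrderedAddMonoid M,
    CanonicallyOrderedAdd M where
  /-- The join of an ascending chain. -/
  csup : (ℕ → M) → M
  isLUB_csup : ∀ K : ℕ → M, Monotone K → IsLUB (Set.range K) (csup K)
  add_csup : ∀ (n : M) (K : ℕ → M), Monotone K → n + csup K = csup fun i => n + K i

variable {M : Type u} [FlowMonoid M]

/-- Continuity: `f` commutes with joins of ascending chains. -/
def FMCont (f : M → M) : Prop :=
  ∀ K : ℕ → M, Monotone K →
    IsLUB (Set.range fun i => f (K i)) (f (FlowMonoid.csup K))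

/-- A flow graph: a finite set of nodes `X ⊆ ℕ`, continuous edge functions, and
a finitely supported inflow from sources outside `X` into `X`. (The edge
functions of sources outside `X` and the inflow outside its domain are
canonically zero.) -/
structure FlowGraph (M : Type u) [FlowMonoid M] where
  /-- The nodes. -/
  X : Finset ℕ
  /-- The edge functions: `E x y` labels the edge from `x` to `y`. -/
  E : ℕ → ℕ → M → M
  /-- The inflow: `inflow y x` is the flow the graph receives at `x ∈ X` from the
  external node `y ∉ X`. -/
  inflow : ℕ → ℕ → M
  econt : ∀ x y, x ∈ X → FMCont (E x y)
  edom : ∀ x y, x ∉ X → E x y = fun _ => 0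
  inflow_fin : ∀ x, (Function.support fun y => inflow y x).Finite
  inflow_dom : ∀ y x, inflow y x ≠ 0 → y ∉ X ∧ x ∈ X

namespace FlowGraph

/-- One step of the flow fixed-point computation, with inflow `i`. -/
noncomputable def stepWith (h : FlowGraph M) (i : ℕ → ℕ → M) (c : ℕ → M) : ℕ → M :=
  fun x => if x ∈ h.X then (∑ᶠ y, i y x) + ∑ y ∈ h.X, h.E y x (c y) else 0

/-- The flow for a custom inflow `i`, obtained by Kleene iteration: the least
function satisfying the flow equation. -/
noncomputable def flowWith (h : FlowGraph M) (i : ℕ → ℕ → M) : ℕ → M :=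
  fun x => FlowMonoid.csup fun n => (h.stepWith i)^[n] (fun _ => 0) x

/-- The flow of a flow graph. -/
noncomputable def flow (h : FlowGraph M) : ℕ → M := h.flowWith h.inflow

/-- The outflow of a flow graph: `out x y = E x y (flow x)`. -/
noncomputable def out (h : FlowGraph M) (x y : ℕ) : M := h.E x y (h.flow x)

/-- The transfer function: maps an inflow `i` to the resulting outflow at `y`. -/
noncomputable def tf (h : FlowGraph M) (i : ℕ → ℕ → M) (y : ℕ) : M :=
  ∑ x ∈ h.X, h.E x y (h.flowWith i x)

/-- The ghost multiplication of flow graphs: disjoint union of the node sets and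
edges; the inflow of each component is restricted to sources outside the other. -/
def gmul (s t : FlowGraph M) : FlowGraph M where
  X := s.X ∪ t.X
  E := fun x y => if x ∈ s.X then s.E x y else t.E x y
  inflow := fun y x => if y ∈ s.X ∪ t.X then 0 else s.inflow y x + t.inflow y x
  econt := by
    intro x y hx
    try dsimp only
    by_cases hs : x ∈ s.X
    · rw [if_pos hs]; exact s.econt x y hs
    · rw [if_neg hs]
      rcases Finset.mem_union.mp hx with h | h
      · exact absurd h hs
      · exact t.econt x y h
  edom := by
    intro x y hx
    try dsimp only
    rw [if_neg fun h => hx (Finset.mem_union_left _ h)]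
    exact t.edom x y fun h => hx (Finset.mem_union_right _ h)
  inflow_fin := by
    intro x
    refine Set.Finite.subset ((s.inflow_fin x).union (t.inflow_fin x)) ?_
    intro y hy
    rw [Function.mem_support] at hy
    try dsimp only at hy
    by_cases hmem : y ∈ s.X ∪ t.X
    · rw [if_pos hmem] at hy; exact absurd rfl hy
    · rw [if_neg hmem] at hy
      by_cases h1 : s.inflow y x = 0
      · have h2 : t.inflow y x ≠ 0 := fun h2 => hy (by rw [h1, h2, add_zero])
        exact Set.mem_union_right _ (Function.mem_support.mpr h2)
      · exact Set.mem_union_left _ (Function.mem_support.mpr h1)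
  inflow_dom := by
    intro y x hy
    try dsimp only at hy
    by_cases hmem : y ∈ s.X ∪ t.X
    · rw [if_pos hmem] at hy; exact absurd rfl hy
    · rw [if_neg hmem] at hy
      refine ⟨hmem, ?_⟩
      by_cases h1 : s.inflow y x = 0
      · have h2 : t.inflow y x ≠ 0 := fun h2 => hy (by rw [h1, h2, add_zero])
        exact Finset.mem_union_right _ (t.inflow_dom y x h2).2
      · exact Finset.mem_union_left _ (s.inflow_dom y x h1).2

/-- Definedness of the multiplication `s ⋆ t` of flow graphs: the ghost
multiplication is defined, the inflow expectation of each graph at the mutual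
boundary matches the outflow of the other, and the flows are preserved in the
composition (whose result is then `gmul s t`). -/
def MDef (s t : FlowGraph M) : Prop :=
  Disjoint s.X t.X ∧
  (∀ x ∈ s.X, ∀ y ∈ t.X, s.out x y = t.inflow x y ∧ t.out y x = s.inflow y x) ∧
  (∀ x ∈ s.X, (gmul s t).flow x = s.flow x) ∧
  (∀ y ∈ t.X, (gmul s t).flow y = t.flow y)

end FlowGraph

/-!
The factors are forced to be the restrictions of `t` to the two node sets: a factor keeps the
nodes and edges of `t` on its node set, and by the boundary condition of `⋆` its inflow is the
external inflow of `t` plus what the rest of `t` sends into it under the flow of `t`.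
Conversely these restrictions do compose by `⋆`, because a restriction has the same flow as `t`
on its nodes. Both flows are least fixed points (Kleene's theorem for the ω-cpo structure of the
flow monoid), and the restricted flow equation is that of `t` with the values outside the node
set frozen at `t.flow`. So `t.flow` solves the restricted equation, while the restricted flow,
extended by `t.flow` outside the node set, is a prefixed point of the equation of `t`.
-/

open OmegaCompletePartialOrder

namespace FlowMonoid

instance : OmegaCompletePartialOrder M where
  ωSup c := csup c
  le_ωSup c n := (isLUB_csup c c.monotone).1 ⟨n, rfl⟩
  ωSup_le c _ h := (isLUB_csup c c.monotone).2 (Set.forall_mem_range.2 h)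

lemma add_ωSup (a : M) (c : Chain M) :
    a + ωSup c = ωSup (c.map ⟨(a + ·), fun _ _ h => add_le_add le_rfl h⟩) :=
  add_csup a c c.monotone

lemma ωScottContinuous_add : ωScottContinuous fun p : M × M => p.1 + p.2 := by
  refine ωScottContinuous.of_monotone_map_ωSup ⟨fun _ _ h => add_le_add h.1 h.2, fun c => ?_⟩
  set K := c.map OrderHom.fst
  set L := c.map OrderHom.snd
  refine le_antisymm ?_ (ωSup_le _ _ fun n => add_le_add (le_ωSup K n) (le_ωSup L n))
  have hKL (m n : ℕ) : K m + L n ≤ (c (max m n)).1 + (c (max m n)).2 :=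
    add_le_add (K.monotone (le_max_left m n)) (L.monotone (le_max_right m n))
  show ωSup K + ωSup L ≤ _
  rw [add_comm, add_ωSup]
  refine ωSup_le _ _ fun n => ?_
  show ωSup L + K n ≤ _
  rw [add_comm, add_ωSup]
  exact ωSup_le _ _ fun m => le_ωSup_of_le (max n m) (hKL n m)

end FlowMonoid

namespace OmegaCompletePartialOrder

variable {α : Type*} [OmegaCompletePartialOrder α]

lemma ωScottContinuous.add {f g : α → M} (hf : ωScottContinuous f) (hg : ωScottContinuous g) :
    ωScottContinuous fun a => f a + g a :=
  FlowMonoid.ωScottContinuous_add.comp (Prod.ωScottContinuous.prodMk hf hg)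

lemma ωScottContinuous.finset_sum {ι : Type*} (s : Finset ι) {f : ι → α → M}
    (hf : ∀ i ∈ s, ωScottContinuous (f i)) : ωScottContinuous fun a => ∑ i ∈ s, f i a := by
  classical
  induction s using Finset.induction_on with
  | empty => simp only [Finset.sum_empty]; exact ωScottContinuous.const
  | insert j s hj ih =>
    simp only [Finset.sum_insert hj]
    exact (hf j (s.mem_insert_self j)).add (ih fun i hi => hf i (Finset.mem_insert_of_mem hi))

end OmegaCompletePartialOrder

lemma FMCont.ωScottContinuous {f : M → M} (hf : FMCont f) : ωScottContinuous f := by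
  rintro _ ⟨c, rfl⟩ - - a ha
  rw [← (isLUB_range_ωSup c).unique ha, ← Set.range_comp]
  exact hf c c.monotone

lemma FMCont.const (c : M) : FMCont fun _ : M => c := by
  intro K _
  rw [Set.range_const]
  exact isLUB_singleton

namespace FlowGraph

attribute [ext] FlowGraph

section Kleene

variable (g : FlowGraph M) (i : ℕ → ℕ → M)

lemma ωScottContinuous_stepWith : ωScottContinuous (g.stepWith i) := by
  refine ωScottContinuous.of_apply₂ fun x => ?_
  unfold stepWith
  split_ifs
  · exact ωScottContinuous.const.add <| .finset_sum _ fun y hy =>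
      (g.econt y x hy).ωScottContinuous.comp (ωScottContinuous.apply y)
  · exact ωScottContinuous.const

lemma monotone_stepWith : Monotone (g.stepWith i) :=
  (g.ωScottContinuous_stepWith i).monotone

noncomputable def stepWithHom : (ℕ → M) →𝒄 (ℕ → M) :=
  ⟨⟨g.stepWith i, g.monotone_stepWith i⟩, (g.ωScottContinuous_stepWith i).map_ωSup⟩

-- `flowWith` is definitionally the `ωSup` of the Kleene chain of `stepWithHom` starting at `0`.
lemma stepWith_flowWith : g.stepWith i (g.flowWith i) = g.flowWith i :=
  fixedPoints.ωSup_iterate_mem_fixedPoint (g.stepWithHom i) 0 fun _ => zero_le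

lemma stepWith_flow : g.stepWith g.inflow g.flow = g.flow :=
  g.stepWith_flowWith g.inflow

lemma flowWith_le {c : ℕ → M} (hc : g.stepWith i c ≤ c) : g.flowWith i ≤ c :=
  fixedPoints.ωSup_iterate_le_prefixedPoint (g.stepWithHom i) 0 (fun _ => zero_le) hc
    fun _ => zero_le

end Kleene

variable {g s t : FlowGraph M} {A B : Finset ℕ} {x y : ℕ}

lemma inflow_eq_zero_of_mem (hy : y ∈ g.X) : g.inflow y x = 0 := by
  by_contra hne
  exact (g.inflow_dom y x hne).1 hy

lemma inflow_eq_zero_of_notMem (hx : x ∉ g.X) : g.inflow y x = 0 := by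
  by_contra hne
  exact hx (g.inflow_dom y x hne).2

lemma out_eq_zero_of_notMem (hy : y ∉ g.X) : g.out y x = 0 := by
  rw [out, g.edom y x hy]

noncomputable def restrict (g : FlowGraph M) (A : Finset ℕ) : FlowGraph M where
  X := A
  E x := if x ∈ A then g.E x else fun _ _ => 0
  inflow y x := if x ∈ A ∧ y ∉ A then g.inflow y x + g.out y x else 0
  econt x y hx := by
    simp only [if_pos hx]
    by_cases hxg : x ∈ g.X
    · exact g.econt x y hxg
    · rw [g.edom x y hxg]
      exact FMCont.const 0
  edom x y hx := by simp only [if_neg hx]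
  inflow_fin x := by
    refine ((g.inflow_fin x).union g.X.finite_toSet).subset fun y hy => ?_
    by_contra hy'
    simp only [Set.mem_union, Function.mem_support, Finset.mem_coe, not_or, not_not] at hy'
    simp [hy'.1, out_eq_zero_of_notMem hy'.2] at hy
  inflow_dom y x hy := by
    by_contra hyx
    exact hy (if_neg fun h => hyx ⟨h.2, h.1⟩)

@[simp]
lemma restrict_X : (g.restrict A).X = A := rfl

lemma restrict_E_of_mem (hx : x ∈ A) : (g.restrict A).E x = g.E x := if_pos hx

lemma restrict_E_of_notMem (hx : x ∉ A) : (g.restrict A).E x = fun _ _ => 0 := if_neg hx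

lemma restrict_inflow :
    (g.restrict A).inflow y x = if x ∈ A ∧ y ∉ A then g.inflow y x + g.out y x else 0 := rfl

lemma restrict_inflow_of_mem (hA : A ⊆ g.X) (hx : x ∈ A) (y : ℕ) :
    (g.restrict A).inflow y x = g.inflow y x + if y ∈ g.X \ A then g.out y x else 0 := by
  by_cases hyA : y ∈ A
  · simp [restrict_inflow, hyA, inflow_eq_zero_of_mem (hA hyA)]
  · by_cases hyg : y ∈ g.X
    · simp [restrict_inflow, hx, hyA, hyg]
    · simp [restrict_inflow, hx, hyA, hyg, out_eq_zero_of_notMem hyg]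

lemma finsum_restrict_inflow (hA : A ⊆ g.X) (hx : x ∈ A) :
    ∑ᶠ y, (g.restrict A).inflow y x = ∑ᶠ y, g.inflow y x + ∑ y ∈ g.X \ A, g.out y x := by
  have hsupp : (Function.support fun y => if y ∈ g.X \ A then g.out y x else 0) ⊆ ↑(g.X \ A) :=
    fun y hy => by_contra fun h => hy (if_neg h)
  rw [finsum_congr (restrict_inflow_of_mem hA hx),
    finsum_add_distrib (g.inflow_fin x) ((g.X \ A).finite_toSet.subset hsupp),
    finsum_eq_sum_of_support_subset _ hsupp]
  exact congrArg _ (Finset.sum_congr rfl fun y hy => if_pos hy)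

lemma stepWith_restrict (hA : A ⊆ g.X) (hx : x ∈ A) (c : ℕ → M) :
    (g.restrict A).stepWith (g.restrict A).inflow c x
      = g.stepWith g.inflow (A.piecewise c g.flow) x := by
  have hE : ∀ y ∈ A, (g.restrict A).E y x (c y) = g.E y x (A.piecewise c g.flow y) :=
    fun y hy => by rw [restrict_E_of_mem hy, Finset.piecewise_eq_of_mem _ _ _ hy]
  have hrest : ∀ y ∈ g.X \ A, g.E y x (A.piecewise c g.flow y) = g.out y x :=
    fun y hy => by rw [Finset.piecewise_eq_of_notMem _ _ _ (Finset.mem_sdiff.1 hy).2, out]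
  rw [stepWith, stepWith, restrict_X, if_pos hx, if_pos (hA hx),
    finsum_restrict_inflow hA hx, Finset.sum_congr rfl hE, ← Finset.sum_sdiff hA,
    Finset.sum_congr rfl hrest, add_assoc]

lemma flow_restrict_le (hA : A ⊆ g.X) : (g.restrict A).flow ≤ g.flow := by
  refine flowWith_le _ _ fun z => ?_
  by_cases hz : z ∈ A
  · rw [stepWith_restrict hA hz, Finset.piecewise_same, stepWith_flow]
  · rw [stepWith, restrict_X, if_neg hz]
    exact zero_le

lemma flow_restrict (hA : A ⊆ g.X) (hx : x ∈ A) : (g.restrict A).flow x = g.flow x := by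
  refine le_antisymm (flow_restrict_le hA x) ?_
  have hc : g.stepWith g.inflow (A.piecewise (g.restrict A).flow g.flow)
      ≤ A.piecewise (g.restrict A).flow g.flow := fun z => by
    by_cases hz : z ∈ A
    · rw [← stepWith_restrict hA hz, stepWith_flow, Finset.piecewise_eq_of_mem _ _ _ hz]
    · rw [Finset.piecewise_eq_of_notMem _ _ _ hz]
      exact (g.monotone_stepWith _ (Finset.piecewise_le_of_le_of_le _ (flow_restrict_le hA) le_rfl)
        z).trans_eq (congrFun g.stepWith_flow z)
  exact (flowWith_le _ _ hc x).trans_eq (Finset.piecewise_eq_of_mem _ _ _ hx)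

lemma gmul_E_of_mem (hx : x ∈ s.X) : (gmul s t).E x = s.E x := funext fun _ => if_pos hx

lemma gmul_E_of_notMem (hx : x ∉ s.X) : (gmul s t).E x = t.E x := funext fun _ => if_neg hx

lemma gmul_inflow_of_mem (hy : y ∈ s.X ∪ t.X) : (gmul s t).inflow y x = 0 := if_pos hy

lemma gmul_inflow_of_notMem (hy : y ∉ s.X ∪ t.X) :
    (gmul s t).inflow y x = s.inflow y x + t.inflow y x := if_neg hy

lemma gmul_comm (hst : Disjoint s.X t.X) : gmul s t = gmul t s := by
  ext1
  · exact Finset.union_comm _ _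
  · funext x
    by_cases hs : x ∈ s.X
    · rw [gmul_E_of_mem hs, gmul_E_of_notMem (Finset.disjoint_left.1 hst hs)]
    · rw [gmul_E_of_notMem hs]
      by_cases ht : x ∈ t.X
      · rw [gmul_E_of_mem ht]
      · rw [gmul_E_of_notMem ht]
        funext y
        rw [s.edom x y hs, t.edom x y ht]
  · funext y x
    simp only [gmul, Finset.union_comm s.X, add_comm (s.inflow y x)]

lemma MDef.symm (h : MDef s t) : MDef t s := by
  obtain ⟨hst, hbd, hs, ht⟩ := h
  refine ⟨hst.symm, fun y hy x hx => (hbd x hx y hy).symm, ?_, ?_⟩ <;> rw [gmul_comm hst.symm]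
  exacts [ht, hs]

lemma gmul_restrict (hAB : Disjoint A B) (hX : g.X = A ∪ B) :
    gmul (g.restrict A) (g.restrict B) = g := by
  ext1
  · exact hX.symm
  · funext x
    by_cases hA : x ∈ A
    · rw [gmul_E_of_mem hA, restrict_E_of_mem hA]
    · rw [gmul_E_of_notMem hA]
      by_cases hB : x ∈ B
      · rw [restrict_E_of_mem hB]
      · rw [restrict_E_of_notMem hB]
        funext y
        rw [g.edom x y (by simp [hX, hA, hB])]
  · funext y x
    by_cases hy : y ∈ A ∪ B
    · rw [gmul_inflow_of_mem hy, inflow_eq_zero_of_mem (hX ▸ hy)]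
    · obtain ⟨hyA, hyB⟩ : y ∉ A ∧ y ∉ B := by simpa using hy
      rw [gmul_inflow_of_notMem hy, restrict_inflow, restrict_inflow,
        out_eq_zero_of_notMem (hX ▸ hy), add_zero]
      by_cases hxA : x ∈ A
      · simp [hxA, hyA, Finset.disjoint_left.1 hAB hxA]
      · by_cases hxB : x ∈ B
        · simp [hxA, hxB, hyB]
        · simp [hxA, hxB, inflow_eq_zero_of_notMem (show x ∉ g.X by simp [hX, hxA, hxB])]

lemma out_restrict (hA : A ⊆ g.X) (hx : x ∈ A) : (g.restrict A).out x y = g.out x y := by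
  rw [out, out, flow_restrict hA hx, restrict_E_of_mem hx]

lemma restrict_inflow_eq_out (hy : y ∈ A) (hx : x ∉ A) (hxg : x ∈ g.X) :
    (g.restrict A).inflow x y = g.out x y := by
  simp [restrict_inflow, hy, hx, inflow_eq_zero_of_mem hxg]

lemma mdef_restrict (hAB : Disjoint A B) (hX : g.X = A ∪ B) :
    MDef (g.restrict A) (g.restrict B) := by
  have hA : A ⊆ g.X := hX ▸ Finset.subset_union_left
  have hB : B ⊆ g.X := hX ▸ Finset.subset_union_right
  refine ⟨hAB, fun x (hx : x ∈ A) y (hy : y ∈ B) => ⟨?_, ?_⟩, fun x (hx : x ∈ A) => ?_,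
    fun y (hy : y ∈ B) => ?_⟩
  · rw [out_restrict hA hx, restrict_inflow_eq_out hy (Finset.disjoint_left.1 hAB hx) (hA hx)]
  · rw [out_restrict hB hy, restrict_inflow_eq_out hx (Finset.disjoint_right.1 hAB hy) (hB hy)]
  · rw [gmul_restrict hAB hX, flow_restrict hA hx]
  · rw [gmul_restrict hAB hX, flow_restrict hB hy]

lemma restrict_gmul_left (h : MDef s t) : (gmul s t).restrict s.X = s := by
  obtain ⟨hst, hbd, -, ht⟩ := h
  ext1
  · rfl
  · funext x
    by_cases hx : x ∈ s.X
    · rw [restrict_E_of_mem hx, gmul_E_of_mem hx]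
    · rw [restrict_E_of_notMem hx]
      funext y
      rw [s.edom x y hx]
  · funext y x
    rw [restrict_inflow]
    split_ifs with hxy
    · obtain ⟨hx, hy⟩ := hxy
      by_cases hyt : y ∈ t.X
      · rw [gmul_inflow_of_mem (Finset.mem_union_right _ hyt), zero_add, ← (hbd x hx y hyt).2,
          out, out, gmul_E_of_notMem hy, ht y hyt]
      · have hyg : y ∉ (gmul s t).X := by simp [gmul, hy, hyt]
        rw [gmul_inflow_of_notMem hyg, out_eq_zero_of_notMem hyg,
          inflow_eq_zero_of_notMem (Finset.disjoint_left.1 hst hx), add_zero, add_zero]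
    · by_contra hne
      exact hxy ⟨(s.inflow_dom y x (Ne.symm hne)).2, (s.inflow_dom y x (Ne.symm hne)).1⟩

lemma restrict_gmul_right (h : MDef s t) : (gmul s t).restrict t.X = t := by
  rw [gmul_comm h.1]
  exact restrict_gmul_left h.symm

end FlowGraph

open FlowGraph in
/-- Unique decomposition of flow graphs. If `s₁ ⌢ s₂ = t`, then
there is a unique pair `(t₁, t₂)` of flow graphs with `t₁ ⋆ t₂ = t` (in
particular the multiplication is defined), `t₁.X = s₁.X` and `t₂.X = s₂.X`. -/
theorem flowGraph_unique_decomposition (s₁ s₂ t : FlowGraph M)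
    (hdisj : Disjoint s₁.X s₂.X) (ht : gmul s₁ s₂ = t) :
    ∃! p : FlowGraph M × FlowGraph M,
      MDef p.1 p.2 ∧ gmul p.1 p.2 = t ∧ p.1.X = s₁.X ∧ p.2.X = s₂.X := by
  have htX : t.X = s₁.X ∪ s₂.X := ht ▸ rfl
  refine ⟨(t.restrict s₁.X, t.restrict s₂.X),
    ⟨mdef_restrict hdisj htX, gmul_restrict hdisj htX, rfl, rfl⟩, ?_⟩
  rintro ⟨q₁, q₂⟩ ⟨hq, rfl, hX₁, hX₂⟩
  rw [← hX₁, ← hX₂, restrict_gmul_left hq, restrict_gmul_right hq]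
end

section
/- Sub-ω-cpo implies (C4): if a relation ⪯ on the flow monoid M is a sub-ω-cpo of the natural order ≤, i.e. ⪯ ⊆ ≤, (M,⪯) is itself an ω-cpo, and every ⪯-ascending chain has the same supremum with respect to ⪯ and with respect to ≤, then condition (C4) holds for every flow graph over M: for all ≤-continuous, pointwise-⪯-monotone functions f, g : (X → M) → (X → M) with fⁱ(⊥) pointwise-⪯ gⁱ(⊥) for all i ∈ ℕ and lfp(f) pointwise-⪯ g(lfp(f)), one has ⨆ᵢ fⁱ(⊥) pointwise-⪯ ⨆ᵢ gⁱ(⊥). -/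
universe u

variable {M : Type u} [FlowMonoid M]

/-- The pointwise join of an ascending chain of functions `X → M`. -/
noncomputable def chainJoin {X : Finset ℕ} (Ch : ℕ → ({x : ℕ // x ∈ X} → M)) :
    {x : ℕ // x ∈ X} → M :=
  fun x => FlowMonoid.csup fun i => Ch i x

/-- `≤`-continuity of a function on `X → M`: it commutes with joins of
pointwise-ascending chains. -/
def ContOn (X : Finset ℕ)
    (f : ({x : ℕ // x ∈ X} → M) → ({x : ℕ // x ∈ X} → M)) : Prop :=
  ∀ Ch : ℕ → ({x : ℕ // x ∈ X} → M), (∀ i x, Ch i x ≤ Ch (i + 1) x) →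
    ∀ x, IsLUB (Set.range fun i => f (Ch i) x) (f (chainJoin Ch) x)

/-- Pointwise `≤`-monotonicity of a function on `X → M`. -/
def MonoOn (X : Finset ℕ)
    (f : ({x : ℕ // x ∈ X} → M) → ({x : ℕ // x ∈ X} → M)) : Prop :=
  ∀ c d : {x : ℕ // x ∈ X} → M, (∀ x, c x ≤ d x) → ∀ x, f c x ≤ f d x

/-- Pointwise `⪯`-monotonicity of a function on `X → M`. -/
def RMonoOn (r : M → M → Prop) (X : Finset ℕ)
    (f : ({x : ℕ // x ∈ X} → M) → ({x : ℕ // x ∈ X} → M)) : Prop :=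
  ∀ c d : {x : ℕ // x ∈ X} → M, (∀ x, r (c x) (d x)) → ∀ x, r (f c x) (f d x)

/-- The join of the Kleene chain `⨆ᵢ fⁱ(⊥)` of a function on `X → M`
(`⊥` is the constant-0 function); for continuous `f` this is `lfp(f)`. -/
noncomputable def kleeneOn {X : Finset ℕ}
    (f : ({x : ℕ // x ∈ X} → M) → ({x : ℕ // x ∈ X} → M)) : {x : ℕ // x ∈ X} → M :=
  fun x => FlowMonoid.csup fun i => (f^[i] fun _ => 0) x

/-- Condition (C4): for all `≤`-continuous, pointwise-`⪯`-monotone functions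
`f, g` on `X → M` with `fⁱ(⊥)` pointwise-`⪯` `gⁱ(⊥)` for all `i` and
`lfp(f)` pointwise-`⪯` `g(lfp(f))`, one has `⨆ᵢ fⁱ(⊥)` pointwise-`⪯` `⨆ᵢ gⁱ(⊥)`. -/
def C4 (r : M → M → Prop) (X : Finset ℕ) : Prop :=
  ∀ f g : ({x : ℕ // x ∈ X} → M) → ({x : ℕ // x ∈ X} → M),
    ContOn X f → ContOn X g → RMonoOn r X f → RMonoOn r X g →
    (∀ (i : ℕ) (x : {x : ℕ // x ∈ X}), r ((f^[i] fun _ => 0) x) ((g^[i] fun _ => 0) x)) →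
    (∀ x, r (kleeneOn f x) (g (kleeneOn f) x)) →
    ∀ x, r (kleeneOn f x) (kleeneOn g x)

/-- `compatible_⪯(h)`: conditions (C1)–(C4) of the relation `⪯` with respect to
the flow graph `h`. -/
def Compatible (r : M → M → Prop) (h : FlowGraph M) : Prop :=
  -- (C1) transitive and `0 ⪯ 0`
  (∀ m n o : M, r m n → r n o → r m o) ∧ r 0 0 ∧
  -- (C2) compatible with addition
  (∀ m n o : M, r m n → r (m + o) (n + o)) ∧
  -- (C3) the edge functions of `h` are `⪯`-monotone
  (∀ x y : ℕ, x ∈ h.X → ∀ m n : M, r m n → r (h.E x y m) (h.E x y n)) ∧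
  -- (C4)
  C4 r h.X

/-! The chain `gⁱ(lfp f)` starts at `lfp f` and is `⪯`-ascending, because `lfp f ⪯ g(lfp f)`
and `g` is `⪯`-monotone. Since `fⁱ(⊥) ≤ gⁱ(⊥)` gives `lfp f ≤ lfp g`, the chain is squeezed
between `gⁱ(⊥)` and `lfp g`, so its `≤`-join is `lfp g`. As `⪯`-chains have the same join for
`⪯` as for `≤`, this yields `lfp f ⪯ lfp g`. -/

theorem RMonoOn.iterate_rel_succ {α : Type*} {r : α → α → Prop} {X : Finset ℕ}
    {g : ({x : ℕ // x ∈ X} → α) → ({x : ℕ // x ∈ X} → α)} (hg : RMonoOn r X g)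
    {c : {x : ℕ // x ∈ X} → α} (hc : ∀ x, r (c x) (g c x)) (i : ℕ) (x : {x : ℕ // x ∈ X}) :
    r ((g^[i] c) x) ((g^[i + 1] c) x) := by
  induction i generalizing x with
  | zero => exact hc x
  | succ i ih =>
    simpa only [Function.iterate_succ_apply'] using hg _ _ ih x

section Kleene

variable {X : Finset ℕ} {f g : ({x : ℕ // x ∈ X} → M) → ({x : ℕ // x ∈ X} → M)}

theorem ContOn.monoOn (hf : ContOn X f) : MonoOn X f := by
  intro c d hcd x
  -- continuity along the chain `c, d, d, …`, whose join is `d`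
  set Ch : ℕ → ({x : ℕ // x ∈ X} → M) := fun i => if i = 0 then c else d
  have hCh_le : ∀ i y, Ch i y ≤ d y := by
    rintro (_ | _) y
    · simpa [Ch] using hcd y
    · simp [Ch]
  have hasc : ∀ i y, Ch i y ≤ Ch (i + 1) y := fun i y => by simpa [Ch] using hCh_le i y
  have hjoin : chainJoin Ch = d := by
    funext y
    refine (FlowMonoid.isLUB_csup _ (monotone_nat_of_le_succ fun i => hasc i y)).unique
      ⟨?_, fun u hu => by simpa [Ch] using hu ⟨1, rfl⟩⟩
    rintro _ ⟨i, rfl⟩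
    exact hCh_le i y
  have hlub := hf Ch hasc x
  rw [hjoin] at hlub
  exact hlub.1 ⟨0, by simp [Ch]⟩

theorem MonoOn.iterate_le_iterate (hf : MonoOn X f) {c d : {x : ℕ // x ∈ X} → M}
    (hcd : ∀ x, c x ≤ d x) (i : ℕ) (x : {x : ℕ // x ∈ X}) : (f^[i] c) x ≤ (f^[i] d) x := by
  induction i generalizing x with
  | zero => exact hcd x
  | succ i ih =>
    rw [Function.iterate_succ_apply', Function.iterate_succ_apply']
    exact hf _ _ ih x

theorem ContOn.iterate_bot_le_succ (hf : ContOn X f) (i : ℕ) (x : {x : ℕ // x ∈ X}) :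
    (f^[i] fun _ => 0) x ≤ (f^[i + 1] fun _ => 0) x := by
  rw [Function.iterate_succ_apply]
  exact hf.monoOn.iterate_le_iterate (fun _ => zero_le) i x

theorem ContOn.isLUB_kleeneOn (hf : ContOn X f) (x : {x : ℕ // x ∈ X}) :
    IsLUB (Set.range fun i => (f^[i] fun _ => 0) x) (kleeneOn f x) :=
  FlowMonoid.isLUB_csup _ (monotone_nat_of_le_succ fun i => hf.iterate_bot_le_succ i x)

theorem ContOn.map_kleeneOn (hf : ContOn X f) (x : {x : ℕ // x ∈ X}) :
    f (kleeneOn f) x = kleeneOn f x := by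
  have hshift : IsLUB (Set.range fun i => f (f^[i] fun _ => 0) x) (f (kleeneOn f) x) :=
    hf (fun i => f^[i] fun _ => 0) hf.iterate_bot_le_succ x
  simp only [← Function.iterate_succ_apply' f] at hshift
  have hk := hf.isLUB_kleeneOn x
  refine hshift.unique ⟨fun _ ⟨i, hi⟩ => hk.1 ⟨i + 1, hi⟩, fun u hu => hk.2 ?_⟩
  rintro _ ⟨i, rfl⟩
  exact (hf.iterate_bot_le_succ i x).trans (hu ⟨i, rfl⟩)

theorem kleeneOn_le_kleeneOn (hf : ContOn X f) (hg : ContOn X g)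
    (hfg : ∀ i x, (f^[i] fun _ => 0) x ≤ (g^[i] fun _ => 0) x) (x : {x : ℕ // x ∈ X}) :
    kleeneOn f x ≤ kleeneOn g x := by
  refine (hf.isLUB_kleeneOn x).2 ?_
  rintro _ ⟨i, rfl⟩
  exact (hfg i x).trans ((hg.isLUB_kleeneOn x).1 ⟨i, rfl⟩)

theorem ContOn.iterate_le_kleeneOn (hg : ContOn X g) {c : {x : ℕ // x ∈ X} → M}
    (hc : ∀ x, c x ≤ kleeneOn g x) (i : ℕ) (x : {x : ℕ // x ∈ X}) :
    (g^[i] c) x ≤ kleeneOn g x := by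
  induction i generalizing x with
  | zero => exact hc x
  | succ i ih =>
    rw [Function.iterate_succ_apply', ← hg.map_kleeneOn x]
    exact hg.monoOn _ _ ih x

theorem ContOn.csup_iterate_eq_kleeneOn (hg : ContOn X g) {c : {x : ℕ // x ∈ X} → M}
    (hc : ∀ x, c x ≤ kleeneOn g x) {x : {x : ℕ // x ∈ X}}
    (hmono : Monotone fun i => (g^[i] c) x) :
    FlowMonoid.csup (fun i => (g^[i] c) x) = kleeneOn g x := by
  have hlub := FlowMonoid.isLUB_csup _ hmono
  apply le_antisymm
  · refine hlub.2 ?_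
    rintro _ ⟨i, rfl⟩
    exact hg.iterate_le_kleeneOn hc i x
  · refine (hg.isLUB_kleeneOn x).2 ?_
    rintro _ ⟨i, rfl⟩
    exact (hg.monoOn.iterate_le_iterate (fun _ => zero_le) i x).trans (hlub.1 ⟨i, rfl⟩)

end Kleene

theorem sub_omega_cpo_implies_C4_general (r : M → M → Prop)
    (hsub : ∀ m n : M, r m n → m ≤ n)
    (hlub : ∀ K : ℕ → M, (∀ i, r (K i) (K (i + 1))) →
      (∀ i, r (K i) (FlowMonoid.csup K)) ∧
      (∀ u : M, (∀ i, r (K i) u) → r (FlowMonoid.csup K) u)) :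
    ∀ h : FlowGraph M, C4 r h.X := by
  intro h f g hf hg _ hg_rmono hiter hfix x
  have hle : ∀ y, kleeneOn f y ≤ kleeneOn g y :=
    kleeneOn_le_kleeneOn hf hg fun i y => hsub _ _ (hiter i y)
  have hchain := hg_rmono.iterate_rel_succ hfix
  have hjoin := hg.csup_iterate_eq_kleeneOn hle
    (monotone_nat_of_le_succ fun i => hsub _ _ (hchain i x))
  simpa [hjoin] using (hlub _ fun i => hchain i x).1 0

/-- Sub-ω-cpo implies (C4). If `⪯` is a partial order contained
in the natural order `≤`, and every `⪯`-ascending chain has `csup K` (its join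
w.r.t. `≤`) as its least upper bound also w.r.t. `⪯` (i.e. `(M,⪯)` is an ω-cpo
whose chain-suprema agree with those of `≤`), then condition (C4) holds for
every flow graph over `M`. -/
theorem sub_omega_cpo_implies_C4 (r : M → M → Prop)
    (hrefl : ∀ m : M, r m m)
    (htrans : ∀ m n o : M, r m n → r n o → r m o)
    (hantisymm : ∀ m n : M, r m n → r n m → m = n)
    (hsub : ∀ m n : M, r m n → m ≤ n)
    (hlub : ∀ K : ℕ → M, (∀ i, r (K i) (K (i + 1))) →
      (∀ i, r (K i) (FlowMonoid.csup K)) ∧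
      (∀ u : M, (∀ i, r (K i) u) → r (FlowMonoid.csup K) u)) :
    ∀ h : FlowGraph M, C4 r h.X :=
  sub_omega_cpo_implies_C4_general r hsub hlub
end
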